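/- arXiv:2107.00071 — 2 statements merged into one kernel-verified Lean document; each statement's English description precedes it below -/
import Mathlib

section
/- Let G be a graph and v a vertex all of whose neighbors have degree at least 2. Form G+l by attaching a new pendant vertex at v. Then R(G+l) - R(G) ≥ 1/√(d_v+1) - (d_v/√2)(1/√d_v - 1/√(d_v+1)), which is strictly greater than (√(d_v+1) - √d_v)/√2. -/
open SimpleGraph Finset
open scoped Classical

noncomputable def randic {V : Type*} [Fintype V] (G : SimpleGraph V) : ℝ :=
  ∑ e ∈ G.edgeFinset,
    Sym2.lift ⟨fun u v => 1 / Real.sqrt ((G.degree u : ℝ) * (G.degree v : ℝ)),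
      fun u v => by simp [mul_comm]⟩ e

noncomputable def ecc {V : Type*} [Fintype V] (G : SimpleGraph V) (v : V) : ℕ :=
  univ.sup fun u => G.dist v u

noncomputable def graphRadius {V : Type*} [Fintype V] (G : SimpleGraph V) : ℕ :=
  sInf (Set.range (ecc G))

noncomputable def graphDiam {V : Type*} [Fintype V] (G : SimpleGraph V) : ℕ :=
  univ.sup fun v => ecc G v

/-- A cactus: a connected graph in which no two distinct cycles share an edge. -/
def IsCactus {V : Type*} (G : SimpleGraph V) : Prop :=
  G.Connected ∧ ∀ ⦃u v : V⦄ (c₁ : G.Walk u u) (c₂ : G.Walk v v),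
    c₁.IsCycle → c₂.IsCycle → ∀ e ∈ c₁.edges, e ∈ c₂.edges →
      c₁.edges.toFinset = c₂.edges.toFinset

def IsCutVertex {V : Type*} (G : SimpleGraph V) (v : V) : Prop :=
  G.Connected ∧ ¬ (G.induce {u : V | u ≠ v}).Connected

/-- Attach a new pendant vertex (the vertex `none`) adjacent to `v`. -/
def addPendant {V : Type*} (G : SimpleGraph V) (v : V) : SimpleGraph (Option V) :=
  SimpleGraph.fromRel fun a b =>
    (∃ x y, a = some x ∧ b = some y ∧ G.Adj x y) ∨ (a = none ∧ b = some v)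

/-!
Attaching the pendant vertex changes only the weights of the new edge, which contributes
`1/√(d_v+1)`, and of the `d_v` edges at `v`: for a neighbour `w` the weight drops from
`1/√(d_v d_w)` to `1/√((d_v+1) d_w)`, a loss of `(1/√d_v - 1/√(d_v+1))/√d_w`, which is at most
`(1/√d_v - 1/√(d_v+1))/√2` because `d_w ≥ 2`. The strict inequality comes from
`d (1/√d - 1/√(d+1)) = √d - √(d+1) + 1/√(d+1)`, which leaves a surplus of
`(1 - 1/√2)/√(d+1) > 0`.
-/

open Real

noncomputable def pendantBound (x : ℝ) : ℝ :=
  1 / √(x + 1) - x / √2 * (1 / √x - 1 / √(x + 1))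

lemma one_div_sqrt_sub_one_div_sqrt_add_one_nonneg {x : ℝ} (hx : 0 < x) :
    0 ≤ 1 / √x - 1 / √(x + 1) :=
  sub_nonneg.2 <| one_div_le_one_div_of_le (sqrt_pos.2 hx) (sqrt_le_sqrt (by linarith))

lemma pendantBound_eq {x : ℝ} (hx : 0 ≤ x) :
    pendantBound x = (√(x + 1) - √x) / √2 + (1 - 1 / √2) / √(x + 1) := by
  have hx1 : x / √(x + 1) = √(x + 1) - 1 / √(x + 1) := by
    have : 0 < √(x + 1) := sqrt_pos.2 (by linarith)
    field_simp
    rw [sq_sqrt (by linarith)]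
    ring
  calc pendantBound x = 1 / √(x + 1) - (x / √x - x / √(x + 1)) / √2 := by
        rw [pendantBound]; ring
    _ = _ := by rw [div_sqrt, hx1]; ring

lemma sqrt_add_one_sub_sqrt_div_sqrt_two_lt_pendantBound {x : ℝ} (hx : 0 ≤ x) :
    (√(x + 1) - √x) / √2 < pendantBound x := by
  have h2 : 1 / √2 < 1 := by
    rw [div_lt_one (by positivity), lt_sqrt zero_le_one]
    norm_num
  rw [pendantBound_eq hx, lt_add_iff_pos_right]
  exact div_pos (by linarith) (sqrt_pos.2 (by linarith))

noncomputable def randicWeight {α : Type*} (deg : α → ℝ) : Sym2 α → ℝ :=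
  Sym2.lift ⟨fun u w ↦ 1 / √(deg u * deg w), fun u w ↦ by simp only [mul_comm]⟩

@[simp]
lemma randicWeight_mk {α : Type*} (deg : α → ℝ) (u w : α) :
    randicWeight deg s(u, w) = 1 / √(deg u * deg w) := rfl

lemma randicWeight_map {α β : Type*} (deg : β → ℝ) (f : α → β) (e : Sym2 α) :
    randicWeight deg (e.map f) = randicWeight (deg ∘ f) e := by
  induction e using Sym2.ind
  rfl

lemma randic_eq_sum_randicWeight {V : Type*} [Fintype V] (G : SimpleGraph V) :
    randic G = ∑ e ∈ G.edgeFinset, randicWeight (fun u ↦ (G.degree u : ℝ)) e := rfl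

namespace SimpleGraph

variable {V : Type*} (G : SimpleGraph V) (v : V)

@[simp]
lemma addPendant_adj_some_some {x y : V} :
    (addPendant G v).Adj (some x) (some y) ↔ G.Adj x y := by
  simp only [addPendant, fromRel_adj]
  aesop (add simp G.adj_comm)

@[simp]
lemma addPendant_adj_some_none {x : V} : (addPendant G v).Adj (some x) none ↔ x = v := by
  simp only [addPendant, fromRel_adj]
  aesop

lemma addPendant_eq_map_sup_edge : addPendant G v = G.map some ⊔ edge none (some v) := by
  ext (_ | a) (_ | b) <;> simp [map_adj', edge_adj, eq_comm, (addPendant G v).adj_comm none]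
  exact Adj.ne

variable [Fintype V]

@[simp]
lemma degree_addPendant_some (u : V) :
    (addPendant G v).degree (some u) = G.degree u + if u = v then 1 else 0 := by
  simp only [← card_neighborFinset_eq_degree, neighborFinset_eq_filter, card_filter,
    Fintype.sum_option, addPendant_adj_some_none, addPendant_adj_some_some]
  ring

@[simp]
lemma degree_addPendant_none : (addPendant G v).degree none = 1 := by
  simp only [← card_neighborFinset_eq_degree, neighborFinset_eq_filter, card_filter,
    Fintype.sum_option, (addPendant G v).adj_comm none, addPendant_adj_some_none]
  simp

lemma edgeFinset_addPendant :
    (addPendant G v).edgeFinset =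
      insert s(none, some v) (G.edgeFinset.map Function.Embedding.some.sym2Map) := by
  have h := edgeFinset_sup_edge (G.map Function.Embedding.some) (s := none) (t := some v)
    (by simp [map_adj']) (by simp)
  rw [cons_eq_insert] at h
  simp only [edgeFinset_map] at h
  convert h using 2
  exact addPendant_eq_map_sup_edge G v

lemma incidenceFinset_eq_image_neighborFinset [DecidableEq V] :
    G.incidenceFinset v = (G.neighborFinset v).image (s(v, ·)) := by
  ext e
  induction e using Sym2.ind with | h a b => ?_
  simp only [mem_incidenceFinset, mk'_mem_incidenceSet_iff, mem_image, mem_neighborFinset,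
    Sym2.eq_iff]
  aesop (add simp G.adj_comm)

lemma sum_edgeFinset_eq_sum_neighborFinset {M : Type*} [AddCommMonoid M] (f : Sym2 V → M)
    (hf : ∀ e ∈ G.edgeFinset, v ∉ e → f e = 0) :
    ∑ e ∈ G.edgeFinset, f e = ∑ w ∈ G.neighborFinset v, f s(v, w) := by
  rw [← sum_subset (G.incidenceFinset_subset v) (fun e he hv ↦ hf e he ?_),
    incidenceFinset_eq_image_neighborFinset, sum_image (fun _ _ _ _ ↦ Sym2.congr_right.1)]
  rw [incidenceFinset_eq_filter, mem_filter] at hv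
  exact fun h ↦ hv ⟨he, h⟩

lemma randic_addPendant :
    randic (addPendant G v) = 1 / √((G.degree v : ℝ) + 1) +
      ∑ e ∈ G.edgeFinset, randicWeight (fun u ↦ (G.degree u : ℝ) + if u = v then 1 else 0) e := by
  have hpendant : s(none, some v) ∉ G.edgeFinset.map Function.Embedding.some.sym2Map := by
    simp only [mem_map, Function.Embedding.sym2Map_apply, not_exists, not_and]
    intro e _ he
    simpa [← he, Sym2.mem_map] using Sym2.mem_mk_left none (some v)
  rw [randic_eq_sum_randicWeight, edgeFinset_addPendant, sum_insert hpendant, sum_map]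
  simp [randicWeight_map, Function.comp_def]

lemma randic_addPendant_sub_randic :
    randic (addPendant G v) - randic G =
      1 / √((G.degree v : ℝ) + 1) - ∑ w ∈ G.neighborFinset v,
        (1 / √(G.degree v : ℝ) - 1 / √((G.degree v : ℝ) + 1)) / √(G.degree w : ℝ) := by
  rw [randic_addPendant, randic_eq_sum_randicWeight, add_sub_assoc, ← sum_sub_distrib,
    sum_edgeFinset_eq_sum_neighborFinset G v, sub_eq_add_neg, ← sum_neg_distrib]
  · refine congrArg _ (sum_congr rfl fun w hw ↦ ?_)
    have hwv : w ≠ v := (G.ne_of_adj ((G.mem_neighborFinset v w).1 hw)).symm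
    simp only [randicWeight_mk, if_pos, if_neg hwv, add_zero]
    rw [sqrt_mul (by positivity), sqrt_mul (by positivity)]
    ring
  · intro e _ hv
    induction e using Sym2.ind with | h a b => ?_
    simp only [Sym2.mem_iff, not_or] at hv
    simp [Ne.symm hv.1, Ne.symm hv.2]

lemma pendantBound_le_randic_addPendant_sub_randic (hnb : ∀ w, G.Adj v w → 2 ≤ G.degree w) :
    pendantBound (G.degree v) ≤ randic (addPendant G v) - randic G := by
  set d : ℝ := (G.degree v : ℝ)
  set c := 1 / √d - 1 / √(d + 1)
  have hterm : ∀ w ∈ G.neighborFinset v, c / √(G.degree w : ℝ) ≤ c / √2 := fun w hw ↦ by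
    rw [mem_neighborFinset] at hw
    have hd : 0 < d := Nat.cast_pos.2 ((G.degree_pos_iff_exists_adj v).2 ⟨w, hw⟩)
    exact div_le_div_of_nonneg_left (one_div_sqrt_sub_one_div_sqrt_add_one_nonneg hd)
      (by positivity) (sqrt_le_sqrt (by exact_mod_cast hnb w hw))
  have hsum := sum_le_card_nsmul _ _ _ hterm
  rw [card_neighborFinset_eq_degree, nsmul_eq_mul] at hsum
  rw [randic_addPendant_sub_randic, pendantBound]
  linarith [show d * (c / √2) = d / √2 * c by ring]

end SimpleGraph

theorem randic_addPendant_of_two_le_degree {V : Type*} [Fintype V] (G : SimpleGraph V)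
    (v : V) (hnb : ∀ w : V, G.Adj v w → 2 ≤ G.degree w) :
    randic (addPendant G v) - randic G ≥
      1 / Real.sqrt ((G.degree v : ℝ) + 1) -
        ((G.degree v : ℝ) / Real.sqrt 2) *
          (1 / Real.sqrt (G.degree v) - 1 / Real.sqrt ((G.degree v : ℝ) + 1)) ∧
    1 / Real.sqrt ((G.degree v : ℝ) + 1) -
        ((G.degree v : ℝ) / Real.sqrt 2) *
          (1 / Real.sqrt (G.degree v) - 1 / Real.sqrt ((G.degree v : ℝ) + 1)) >
      (Real.sqrt ((G.degree v : ℝ) + 1) - Real.sqrt (G.degree v)) / Real.sqrt 2 :=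
  ⟨G.pendantBound_le_randic_addPendant_sub_randic v hnb,
    sqrt_add_one_sub_sqrt_div_sqrt_two_lt_pendantBound (Nat.cast_nonneg _)⟩
end

section
/- Let G be a nontrivial cactus (a cactus with no bridges) on n vertices with k cycles. Then R(G) ≥ (n - k - 1)/2 + √k, with equality for a bouquet of cycles (k cycles all sharing a single common vertex, all other vertices of degree 2). -/
open SimpleGraph Finset
open scoped Classical

/-!
With `s v = √(2 / d v)`, every edge `uv` satisfies
`1 / √(d u * d v) = s u * s v / 2 = (s u + s v) / 2 - 1 / 2 + (1 - s u) * (1 - s v) / 2`,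
and summing over the edges gives
`R(G) = ∑ v, √(d v / 2) - m / 2 + ∑ uv, (1 - s u) * (1 - s v) / 2`.
In a connected bridgeless graph on at least two vertices every degree is at least `2`, so the
last sum is nonnegative; it vanishes when every edge has an endpoint of degree `2`.
Concavity of the square root, as `√(1 + ∑ (x v - 1)) ≤ 1 + ∑ (√(x v) - 1)` for `x v ≥ 1`,
applied to `x v = d v / 2` with `∑ (d v / 2 - 1) = m - n = k - 1`, gives
`∑ v, √(d v / 2) ≥ √k + n - 1`, with equality for a bouquet of cycles.
-/

namespace Real

theorem sqrt_add_sub_one_le {a b : ℝ} (ha : 1 ≤ a) (hb : 1 ≤ b) :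
    √(a + b - 1) ≤ √a + √b - 1 := by
  have hsa : 1 ≤ √a := one_le_sqrt.mpr ha
  have hsb : 1 ≤ √b := one_le_sqrt.mpr hb
  rw [sqrt_le_left (by linarith)]
  nlinarith [sq_sqrt (zero_le_one.trans ha), sq_sqrt (zero_le_one.trans hb),
    mul_nonneg (sub_nonneg.mpr hsa) (sub_nonneg.mpr hsb)]

theorem sqrt_one_add_sum_sub_one_le {ι : Type*} (s : Finset ι) {x : ι → ℝ}
    (hx : ∀ i ∈ s, 1 ≤ x i) :
    √(1 + ∑ i ∈ s, (x i - 1)) ≤ 1 + ∑ i ∈ s, (√(x i) - 1) := by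
  induction s using Finset.cons_induction with
  | empty => simp
  | cons i s hi ih =>
    rw [forall_mem_cons] at hx
    have hs : 1 ≤ 1 + ∑ j ∈ s, (x j - 1) :=
      le_add_of_nonneg_right (sum_nonneg fun j hj => sub_nonneg.mpr (hx.2 j hj))
    calc √(1 + ∑ j ∈ cons i s hi, (x j - 1))
        = √(x i + (1 + ∑ j ∈ s, (x j - 1)) - 1) := by rw [sum_cons]; ring_nf
      _ ≤ √(x i) + √(1 + ∑ j ∈ s, (x j - 1)) - 1 := sqrt_add_sub_one_le hx.1 hs
      _ ≤ 1 + ∑ j ∈ cons i s hi, (√(x j) - 1) := by rw [sum_cons]; linarith [ih hx.2]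

theorem one_div_sqrt_mul {a b : ℝ} (ha : 0 ≤ a) (hb : 0 ≤ b) :
    1 / √(a * b) = √(2 / a) * √(2 / b) / 2 := by
  rw [← sqrt_mul (div_nonneg zero_le_two ha), div_mul_div_comm,
    show (2 : ℝ) * 2 = 2 ^ 2 by norm_num, sqrt_div' _ (mul_nonneg ha hb), sqrt_sq zero_le_two]
  ring

theorem mul_sqrt_two_div {d : ℝ} (hd : 0 ≤ d) : d * √(2 / d) / 2 = √(d / 2) := by
  rcases hd.eq_or_lt with rfl | hd
  · simp
  rw [sqrt_div' _ hd.le, sqrt_div' _ zero_le_two]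
  have := sq_sqrt hd.le
  have := sq_sqrt (zero_le_two (α := ℝ))
  field_simp
  nlinarith

theorem sqrt_two_div_le_one {d : ℝ} (hd : 2 ≤ d) : √(2 / d) ≤ 1 := by
  rw [sqrt_le_one, div_le_one (by linarith)]
  exact hd

end Real

namespace SimpleGraph

variable {V : Type*} [Fintype V] (G : SimpleGraph V)

theorem sum_edgeFinset_lift_add {M : Type*} [AddCommMonoid M] (f : V → M) :
    ∑ e ∈ G.edgeFinset, Sym2.lift ⟨fun a b => f a + f b, fun _ _ => add_comm _ _⟩ e =
      ∑ v, G.degree v • f v := by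
  have hedge : ∀ e ∈ G.edgeFinset,
      Sym2.lift ⟨fun a b => f a + f b, fun _ _ => add_comm _ _⟩ e = ∑ v ∈ e.toFinset, f v := by
    refine Sym2.ind fun a b he => ?_
    rw [Sym2.lift_mk, Sym2.toFinset_mk_eq, sum_pair (G.ne_of_adj (G.mem_edgeFinset.mp he))]
  rw [sum_congr rfl hedge, sum_comm' (t' := univ) (s' := fun v => G.incidenceFinset v)]
  · simp [card_incidenceFinset_eq_degree]
  · simp [incidenceFinset_eq_filter, and_comm]

theorem two_le_degree_of_forall_not_isBridge [Nontrivial V] (hG : G.Preconnected)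
    (hbridge : ∀ e : Sym2 V, ¬ G.IsBridge e) (v : V) : 2 ≤ G.degree v := by
  have hpos := hG.degree_pos_of_nontrivial v
  by_contra! hlt
  obtain ⟨w, hvw, hw⟩ := degree_eq_one_iff_existsUnique_adj.mp (by omega : G.degree v = 1)
  refine hbridge s(v, w) (isBridge_iff_forall_walk_mem_edges.mpr fun p => ?_)
  cases p with
  | nil => exact (G.irrefl hvw).elim
  | cons h _ => simp [hw _ h]

/-- The amount by which an edge's Randić weight `1 / √(d a * d b)` exceeds
`(√(2 / d a) + √(2 / d b) - 1) / 2`. -/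
noncomputable def randicExcess : Sym2 V → ℝ :=
  Sym2.lift ⟨fun a b => (1 - √(2 / G.degree a)) * (1 - √(2 / G.degree b)) / 2,
    fun _ _ => by ring⟩

theorem randic_eq_sum_sqrt_sub_add :
    randic G = ∑ v, √(G.degree v / 2) - #G.edgeFinset / 2 +
      ∑ e ∈ G.edgeFinset, G.randicExcess e := by
  have hedge : ∀ e ∈ G.edgeFinset,
      Sym2.lift ⟨fun a b => 1 / √((G.degree a : ℝ) * G.degree b),
        fun a b => by simp [mul_comm]⟩ e =
        Sym2.lift ⟨fun a b => √(2 / G.degree a) / 2 + √(2 / G.degree b) / 2,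
          fun _ _ => add_comm _ _⟩ e - 1 / 2 + G.randicExcess e := by
    refine Sym2.ind fun a b _ => ?_
    simp only [randicExcess, Sym2.lift_mk]
    rw [Real.one_div_sqrt_mul (Nat.cast_nonneg _) (Nat.cast_nonneg _)]
    ring
  rw [randic, sum_congr rfl hedge, sum_add_distrib, sum_sub_distrib,
    sum_edgeFinset_lift_add, sum_const, nsmul_eq_mul]
  congr 2
  · refine sum_congr rfl fun v _ => ?_
    rw [nsmul_eq_mul, ← mul_div_assoc, Real.mul_sqrt_two_div (Nat.cast_nonneg _)]
  · ring

theorem randicExcess_nonneg (h : ∀ v, 2 ≤ G.degree v) (e : Sym2 V) : 0 ≤ G.randicExcess e := by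
  have hle : ∀ v, √(2 / G.degree v) ≤ 1 := fun v =>
    Real.sqrt_two_div_le_one (by exact_mod_cast h v)
  induction e using Sym2.ind with | _ a b => ?_
  exact div_nonneg (mul_nonneg (sub_nonneg.mpr (hle a)) (sub_nonneg.mpr (hle b))) zero_le_two

theorem le_randic_of_two_le_degree (h : ∀ v, 2 ≤ G.degree v) :
    √(#G.edgeFinset - Fintype.card V + 1) + (Fintype.card V - 1) - #G.edgeFinset / 2 ≤
      randic G := by
  have hhalf : ∀ v ∈ univ, 1 ≤ (G.degree v : ℝ) / 2 := fun v _ => by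
    rw [le_div_iff₀ two_pos, one_mul]
    exact_mod_cast h v
  have hsum : ∑ v, (G.degree v : ℝ) / 2 = #G.edgeFinset := by
    rw [← sum_div, ← Nat.cast_sum, sum_degrees_eq_twice_card_edges]
    push_cast
    ring
  have hconcave := Real.sqrt_one_add_sum_sub_one_le univ hhalf
  rw [sum_sub_distrib, sum_sub_distrib, hsum, sum_const, card_univ, nsmul_one,
    add_comm (1 : ℝ)] at hconcave
  have hexcess := sum_nonneg fun e (_ : e ∈ G.edgeFinset) => G.randicExcess_nonneg h e
  rw [randic_eq_sum_sqrt_sub_add]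
  linarith

theorem randic_eq_of_forall_ne_degree_eq_two {v : V} (hv : ∀ u ≠ v, G.degree u = 2) :
    randic G = √(G.degree v / 2) + (Fintype.card V - 1) - #G.edgeFinset / 2 := by
  have hexcess : ∑ e ∈ G.edgeFinset, G.randicExcess e = 0 := by
    refine sum_eq_zero fun e he => ?_
    induction e using Sym2.ind with | _ a b => ?_
    simp only [randicExcess, Sym2.lift_mk]
    rcases eq_or_ne a v with rfl | ha
    · rw [hv b (G.ne_of_adj (G.mem_edgeFinset.mp he)).symm]
      norm_num
    · rw [hv a ha]
      norm_num
  have hsum : ∑ u, √(G.degree u / 2 : ℝ) = √(G.degree v / 2) + (Fintype.card V - 1) := by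
    rw [← add_sum_erase _ _ (mem_univ v), sum_congr rfl fun u hu =>
      show √(G.degree u / 2 : ℝ) = 1 by rw [hv u (ne_of_mem_erase hu)]; norm_num]
    simp [card_erase_of_mem, Nat.cast_pred (Fintype.card_pos_iff.mpr ⟨v⟩)]
  rw [randic_eq_sum_sqrt_sub_add, hexcess, hsum, add_zero]

theorem degree_add_two_mul_card_eq_of_forall_ne_degree_eq_two {v : V}
    (hv : ∀ u ≠ v, G.degree u = 2) :
    G.degree v + 2 * Fintype.card V = 2 * #G.edgeFinset + 2 := by
  rw [← sum_degrees_eq_twice_card_edges, ← add_sum_erase _ _ (mem_univ v),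
    sum_congr rfl fun u hu => hv u (ne_of_mem_erase hu), sum_const,
    card_erase_of_mem (mem_univ v), card_univ, smul_eq_mul]
  have := Fintype.card_pos_iff.mpr ⟨v⟩
  omega

end SimpleGraph

theorem nontrivial_cactus_randic_min {V : Type*} [Fintype V] (G : SimpleGraph V)
    (hG : IsCactus G) (hbridgeless : ∀ e : Sym2 V, ¬ G.IsBridge e)
    (k : ℕ) (hk : G.edgeFinset.card + 1 = Fintype.card V + k) :
    randic G ≥ ((Fintype.card V : ℝ) - k - 1) / 2 + Real.sqrt k ∧
    ((∃ v : V, ∀ u : V, u ≠ v → G.degree u = 2) →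
      randic G = ((Fintype.card V : ℝ) - k - 1) / 2 + Real.sqrt k) := by
  have hm : (#G.edgeFinset : ℝ) = Fintype.card V + k - 1 := by
    rw [eq_sub_iff_add_eq]
    exact_mod_cast hk
  have hbouquet : (∃ v : V, ∀ u : V, u ≠ v → G.degree u = 2) →
      randic G = ((Fintype.card V : ℝ) - k - 1) / 2 + Real.sqrt k := by
    rintro ⟨v, hv⟩
    have hdeg : G.degree v = 2 * k := by
      have := G.degree_add_two_mul_card_eq_of_forall_ne_degree_eq_two hv
      omega
    rw [G.randic_eq_of_forall_ne_degree_eq_two hv, hdeg, hm]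
    push_cast
    ring_nf
  refine ⟨?_, hbouquet⟩
  cases subsingleton_or_nontrivial V
  · obtain ⟨v⟩ := hG.1.nonempty
    exact (hbouquet ⟨v, fun u hu => absurd (Subsingleton.elim u v) hu⟩).ge
  · have h := G.le_randic_of_two_le_degree
      (G.two_le_degree_of_forall_not_isBridge hG.1.preconnected hbridgeless)
    rw [hm, show (Fintype.card V : ℝ) + k - 1 - Fintype.card V + 1 = k by ring] at h
    linarith
end
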